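/- If, for binary m×m arrays X and Y (with Y of matching size), there exists an array E with E ∈ D_{0,1}(X) ∩ D_{0,1}(Y), then there exists an array B with B ∈ I_{0,1}(X) ∩ I_{0,1}(Y). (One direction of the single-column insertion/deletion equivalence: nonempty common deletion ball implies nonempty common insertion ball.) -/
import Mathlib


/-- `E` is obtained from `X` by deleting rows and columns (keeping relative order). -/
def IsSubArray {r1 c1 r2 c2 : ℕ} (E : Matrix (Fin r1) (Fin c1) Bool)
    (X : Matrix (Fin r2) (Fin c2) Bool) : Prop :=
  ∃ f : Fin r1 → Fin r2, ∃ g : Fin c1 → Fin c2,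
    StrictMono f ∧ StrictMono g ∧ ∀ i j, E i j = X (f i) (g j)

lemma fin_strictMono_add_le {n N : ℕ} {g : Fin n → Fin N} (hg : StrictMono g) :
    ∀ d : ℕ, ∀ j k : Fin n, (k : ℕ) = j + d → (g j : ℕ) + d ≤ g k := by
  intro d
  induction d with
  | zero =>
    intro j k hk
    have : j = k := Fin.ext (by omega)
    subst this; omega
  | succ d ih =>
    intro j k hk
    have hk' : (j : ℕ) + d < n := by omega
    have h1 := ih j ⟨j + d, hk'⟩ rfl
    have h2 : g ⟨j + d, hk'⟩ < g k := hg (by rw [Fin.lt_def]; simp; omega)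
    rw [Fin.lt_def] at h2
    omega

lemma skip_char {n : ℕ} {g : Fin n → Fin (n+1)} (hg : StrictMono g) :
    ∃ a : ℕ, a ≤ n ∧ ∀ j : Fin n, (g j : ℕ) = if (j : ℕ) < a then (j : ℕ) else (j : ℕ) + 1 := by
  rcases Nat.eq_zero_or_pos n with rfl | hn
  · exact ⟨0, le_refl 0, fun j => j.elim0⟩
  have h1 : ∀ j : Fin n, (j : ℕ) ≤ g j := by
    intro j
    have := fin_strictMono_add_le hg (j : ℕ) ⟨0, hn⟩ j (by simp)
    omega
  have h2 : ∀ j : Fin n, (g j : ℕ) ≤ j + 1 := by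
    intro j
    have hl : n - 1 < n := by omega
    have := fin_strictMono_add_le hg (n - 1 - j) j ⟨n-1, hl⟩ (by simp; omega)
    have := (g ⟨n-1, hl⟩).isLt
    omega
  by_cases he : ∃ j : Fin n, (g j : ℕ) = j + 1
  · have he' : ∃ k : ℕ, ∃ hk : k < n, (g ⟨k, hk⟩ : ℕ) = k + 1 := by
      obtain ⟨j, hj⟩ := he; exact ⟨j, j.isLt, by simpa using hj⟩
    obtain ⟨hak, hav⟩ := Nat.find_spec he'
    refine ⟨Nat.find he', by omega, fun j => ?_⟩
    by_cases hja : (j : ℕ) < Nat.find he'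
    · have hne : (g j : ℕ) ≠ j + 1 := fun hc => Nat.find_min he' hja ⟨j.isLt, by simpa using hc⟩
      have := h1 j; have := h2 j
      simp only [if_pos hja]; omega
    · have hadd := fin_strictMono_add_le hg ((j : ℕ) - Nat.find he') ⟨Nat.find he', hak⟩ j (by simp; omega)
      have hav' : (g ⟨Nat.find he', hak⟩ : ℕ) = Nat.find he' + 1 := hav
      have := h2 j
      simp only [if_neg hja]; omega
  · push_neg at he
    refine ⟨n, le_refl n, fun j => ?_⟩
    have := h1 j; have := h2 j; have := he j
    simp only [if_pos j.isLt]; omega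

lemma strictMono_fin_id {m : ℕ} {f : Fin m → Fin m} (hf : StrictMono f) : f = id := by
  funext i
  rcases Nat.eq_zero_or_pos m with rfl | hm
  · exact i.elim0
  have h1 := fin_strictMono_add_le hf (i : ℕ) ⟨0, hm⟩ i (by simp)
  have hl : m - 1 < m := by omega
  have h2 := fin_strictMono_add_le hf (m - 1 - i) i ⟨m - 1, hl⟩ (by simp; omega)
  have := (f ⟨m - 1, hl⟩).isLt
  exact Fin.ext (by simp; omega)
lemma key_lemma {n : ℕ} (X Y : Matrix (Fin (n+1)) (Fin (n+1)) Bool)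
    (a b : ℕ) (ha : a ≤ n) (hb : b ≤ n) (hab : a ≤ b)
    (hXY : ∀ (i : Fin (n+1)) (j : ℕ) (hj : j < n),
      X i ⟨if j < a then j else j + 1, by split_ifs <;> omega⟩ =
      Y i ⟨if j < b then j else j + 1, by split_ifs <;> omega⟩) :
    ∃ B : Matrix (Fin (n+1)) (Fin (n+2)) Bool, IsSubArray X B ∧ IsSubArray Y B := by
  classical
  set B : Matrix (Fin (n+1)) (Fin (n+2)) Bool :=
    fun i k => if h : (k : ℕ) ≤ a then X i ⟨k, by omega⟩ else Y i ⟨(k : ℕ) - 1, by omega⟩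
    with hB
  have hBX : ∀ (i : Fin (n+1)) (v : ℕ) (hv : v < n + 2) (hva : v ≤ a),
      B i ⟨v, hv⟩ = X i ⟨v, by omega⟩ := by
    intro i v hv hva
    simp only [hB]
    rw [dif_pos hva]
  have hBY : ∀ (i : Fin (n+1)) (v : ℕ) (hv : v < n + 2) (hva : a < v),
      B i ⟨v, hv⟩ = Y i ⟨v - 1, by omega⟩ := by
    intro i v hv hva
    simp only [hB]
    rw [dif_neg (by omega)]
  refine ⟨B, ⟨id, fun k => ⟨if (k : ℕ) ≤ b then (k : ℕ) else (k : ℕ) + 1,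
      by split_ifs <;> omega⟩, strictMono_id, ?_, ?_⟩,
    ⟨id, fun k => ⟨if (k : ℕ) < a then (k : ℕ) else (k : ℕ) + 1,
      by split_ifs <;> omega⟩, strictMono_id, ?_, ?_⟩⟩
  · intro k l hkl
    have hkl' : (k : ℕ) < l := hkl
    rw [Fin.lt_def]
    simp only [Fin.val_mk]
    split_ifs <;> omega
  · intro i k
    simp only [id_eq]
    by_cases hkb : (k : ℕ) ≤ b
    · have e : (⟨if (k : ℕ) ≤ b then (k : ℕ) else (k : ℕ) + 1, by split_ifs <;> omega⟩ :
          Fin (n+2)) = ⟨(k : ℕ), by omega⟩ :=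
        Fin.ext (by
          show (if (k : ℕ) ≤ b then (k : ℕ) else (k : ℕ) + 1) = (k : ℕ)
          rw [if_pos hkb])
      rw [e]
      by_cases hka : (k : ℕ) ≤ a
      · rw [hBX i k (by omega) hka]
      · rw [hBY i k (by omega) (by omega)]
        have H := hXY i ((k : ℕ) - 1) (by omega)
        have e1 : (⟨if (k : ℕ) - 1 < a then (k : ℕ) - 1 else (k : ℕ) - 1 + 1,
            by split_ifs <;> omega⟩ : Fin (n+1)) = k :=
          Fin.ext (by
            show (if (k : ℕ) - 1 < a then (k : ℕ) - 1 else (k : ℕ) - 1 + 1) = (k : ℕ)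
            rw [if_neg (by omega)]; omega)
        have e2 : (⟨if (k : ℕ) - 1 < b then (k : ℕ) - 1 else (k : ℕ) - 1 + 1,
            by split_ifs <;> omega⟩ : Fin (n+1)) = ⟨(k : ℕ) - 1, by omega⟩ :=
          Fin.ext (by
            show (if (k : ℕ) - 1 < b then (k : ℕ) - 1 else (k : ℕ) - 1 + 1) = (k : ℕ) - 1
            rw [if_pos (by omega)])
        rw [e1, e2] at H
        exact H
    · have e : (⟨if (k : ℕ) ≤ b then (k : ℕ) else (k : ℕ) + 1, by split_ifs <;> omega⟩ :
          Fin (n+2)) = ⟨(k : ℕ) + 1, by omega⟩ :=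
        Fin.ext (by
          show (if (k : ℕ) ≤ b then (k : ℕ) else (k : ℕ) + 1) = (k : ℕ) + 1
          rw [if_neg hkb])
      rw [e]
      rw [hBY i ((k : ℕ) + 1) (by omega) (by omega)]
      have H := hXY i ((k : ℕ) - 1) (by omega)
      have e1 : (⟨if (k : ℕ) - 1 < a then (k : ℕ) - 1 else (k : ℕ) - 1 + 1,
          by split_ifs <;> omega⟩ : Fin (n+1)) = k :=
        Fin.ext (by
          show (if (k : ℕ) - 1 < a then (k : ℕ) - 1 else (k : ℕ) - 1 + 1) = (k : ℕ)
          rw [if_neg (by omega)]; omega)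
      have e2 : (⟨if (k : ℕ) - 1 < b then (k : ℕ) - 1 else (k : ℕ) - 1 + 1,
          by split_ifs <;> omega⟩ : Fin (n+1)) = ⟨(k : ℕ) + 1 - 1, by omega⟩ :=
        Fin.ext (by
          show (if (k : ℕ) - 1 < b then (k : ℕ) - 1 else (k : ℕ) - 1 + 1) = (k : ℕ) + 1 - 1
          rw [if_neg (by omega)]; omega)
      rw [e1, e2] at H
      exact H
  · intro k l hkl
    have hkl' : (k : ℕ) < l := hkl
    rw [Fin.lt_def]
    simp only [Fin.val_mk]
    split_ifs <;> omega
  · intro i k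
    simp only [id_eq]
    by_cases hka : (k : ℕ) < a
    · have e : (⟨if (k : ℕ) < a then (k : ℕ) else (k : ℕ) + 1, by split_ifs <;> omega⟩ :
          Fin (n+2)) = ⟨(k : ℕ), by omega⟩ :=
        Fin.ext (by
          show (if (k : ℕ) < a then (k : ℕ) else (k : ℕ) + 1) = (k : ℕ)
          rw [if_pos hka])
      rw [e]
      rw [hBX i k (by omega) (by omega)]
      have H := hXY i (k : ℕ) (by omega)
      have e1 : (⟨if (k : ℕ) < a then (k : ℕ) else (k : ℕ) + 1,
          by split_ifs <;> omega⟩ : Fin (n+1)) = ⟨(k : ℕ), by omega⟩ :=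
        Fin.ext (by
          show (if (k : ℕ) < a then (k : ℕ) else (k : ℕ) + 1) = (k : ℕ)
          rw [if_pos hka])
      have e2 : (⟨if (k : ℕ) < b then (k : ℕ) else (k : ℕ) + 1,
          by split_ifs <;> omega⟩ : Fin (n+1)) = k :=
        Fin.ext (by
          show (if (k : ℕ) < b then (k : ℕ) else (k : ℕ) + 1) = (k : ℕ)
          rw [if_pos (by omega)])
      rw [e1, e2] at H
      exact H.symm
    · have e : (⟨if (k : ℕ) < a then (k : ℕ) else (k : ℕ) + 1, by split_ifs <;> omega⟩ :
          Fin (n+2)) = ⟨(k : ℕ) + 1, by omega⟩ :=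
        Fin.ext (by
          show (if (k : ℕ) < a then (k : ℕ) else (k : ℕ) + 1) = (k : ℕ) + 1
          rw [if_neg hka])
      rw [e]
      rw [hBY i ((k : ℕ) + 1) (by omega) (by omega)]
      exact congrArg _ (Fin.ext (by simp))

/-- If `X` and `Y` have a common element in their single-column-deletion balls,
then they have a common element in their single-column-insertion balls. -/
theorem common_deletion_implies_common_insertion (m : ℕ)
    (X Y : Matrix (Fin m) (Fin m) Bool)
    (h : ∃ E : Matrix (Fin m) (Fin (m - 1)) Bool, IsSubArray E X ∧ IsSubArray E Y) :
    ∃ B : Matrix (Fin m) (Fin (m + 1)) Bool, IsSubArray X B ∧ IsSubArray Y B := by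
  obtain ⟨E, ⟨f1, g1, hf1, hg1, hE1⟩, ⟨f2, g2, hf2, hg2, hE2⟩⟩ := h
  rcases Nat.eq_zero_or_pos m with rfl | hm
  · refine ⟨fun _ _ => false, ⟨Fin.elim0, Fin.elim0, ?_, ?_, fun i => i.elim0⟩,
      ⟨Fin.elim0, Fin.elim0, ?_, ?_, fun i => i.elim0⟩⟩ <;>
    · intro a b hab
      exact a.elim0
  obtain ⟨n, rfl⟩ := Nat.exists_eq_succ_of_ne_zero hm.ne'
  obtain ⟨a, ha, hga⟩ := skip_char hg1
  obtain ⟨b, hb, hgb⟩ := skip_char hg2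
  have hid1 := strictMono_fin_id hf1
  have hid2 := strictMono_fin_id hf2
  have hXY : ∀ (i : Fin (n+1)) (j : ℕ) (hj : j < n),
      X i ⟨if j < a then j else j + 1, by split_ifs <;> omega⟩ =
      Y i ⟨if j < b then j else j + 1, by split_ifs <;> omega⟩ := by
    intro i j hj
    have h1 := hE1 i ⟨j, hj⟩
    have h2 := hE2 i ⟨j, hj⟩
    rw [hid1, id_eq] at h1
    rw [hid2, id_eq] at h2
    have e1 : g1 ⟨j, hj⟩ = ⟨if j < a then j else j + 1, by split_ifs <;> omega⟩ :=
      Fin.ext (by simp [hga ⟨j, hj⟩])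
    have e2 : g2 ⟨j, hj⟩ = ⟨if j < b then j else j + 1, by split_ifs <;> omega⟩ :=
      Fin.ext (by simp [hgb ⟨j, hj⟩])
    rw [e1] at h1
    rw [e2] at h2
    rw [← h1, ← h2]
  rcases le_total a b with hab | hba
  · exact key_lemma X Y a b ha hb hab hXY
  · obtain ⟨B, hYB, hXB⟩ := key_lemma Y X b a hb ha hba (fun i j hj => (hXY i j hj).symm)
    exact ⟨B, hXB, hYB⟩
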